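/- arXiv:2402.07022 — 3 statements merged into one kernel-verified Lean document; each statement's English description precedes it below -/
import Mathlib

section
/- (Proposition 1, part 2.) Suppose the subjects known to be cured are exactly those whose observed time exceeds a known fixed cure threshold d: there is an index n₁ ≤ n such that for i ≤ n₁ one has T_(i) < d and ξ_iν_i = 0, while for i > n₁ one has T_(i) ≥ d, δ_i = 0 and ξ_iν_i = 1. Then for every t the proposed product-limit estimator coincides with Beran's estimator: Ŝ^c(t) = Ŝ(t). -/
open scoped Classical
open Finset

noncomputable section

/-- The proposed product-limit estimator `Ŝ^c(t)` in the mixture cure model with partially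
known cure status: `B i` are the (positive) weights, `T i` the ordered observed times
(values in `ℝ ∪ {+∞}` are allowed, hence `EReal`), `d i` the uncensored-event indicator and
`c i` the indicator of being censored and known to be cured. -/
def Shatc (n : ℕ) (B : Fin n → ℝ) (T : Fin n → EReal) (d c : Fin n → Bool) (t : ℝ) : ℝ :=
  ∏ i : Fin n,
    (1 - (if d i = true ∧ T i ≤ (t : EReal) then B i else 0) /
      ((∑ j ∈ univ.filter fun j => i ≤ j, B j) +
        ∑ j ∈ univ.filter fun j => j < i ∧ c j = true, B j))

/-- Beran's estimator `Ŝ(t)`, which ignores the cure status information. -/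
def ShatBeran (n : ℕ) (B : Fin n → ℝ) (T : Fin n → EReal) (d : Fin n → Bool) (t : ℝ) : ℝ :=
  ∏ i : Fin n,
    (1 - (if d i = true ∧ T i ≤ (t : EReal) then B i else 0) /
      ∑ j ∈ univ.filter fun j => i ≤ j, B j)

theorem Shatc_eq_ShatBeran_of_no_cured_before_event {n : ℕ} (B : Fin n → ℝ) (T : Fin n → EReal)
    (d c : Fin n → Bool) (t : ℝ) (h : ∀ i j : Fin n, d i = true → j < i → c j = false) :
    Shatc n B T d c t = ShatBeran n B T d t := by
  unfold Shatc ShatBeran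
  refine prod_congr rfl fun i _ => ?_
  by_cases hi : d i = true
  · have hno_cured : univ.filter (fun j => j < i ∧ c j = true) = ∅ :=
      filter_eq_empty_iff.2 fun j _ ⟨hji, hcj⟩ => by simp [h i j hi hji] at hcj
    rw [hno_cured, sum_empty, add_zero]
  · simp [hi]

theorem stmt8_general (n : ℕ) (B : Fin n → ℝ)
    (T : Fin n → EReal) (d c : Fin n → Bool)
    (dth : ℝ) (n₁ : ℕ)
    (hlow : ∀ i : Fin n, (i : ℕ) < n₁ → T i < (dth : EReal) ∧ c i = false)
    (hhigh : ∀ i : Fin n, n₁ ≤ (i : ℕ) → (dth : EReal) ≤ T i ∧ d i = false ∧ c i = true)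
    (t : ℝ) :
    Shatc n B T d c t = ShatBeran n B T d t := by
  refine Shatc_eq_ShatBeran_of_no_cured_before_event B T d c t fun i j hdi hji => ?_
  have hi : (i : ℕ) < n₁ := by
    by_contra! hi
    simp [(hhigh i hi).2.1] at hdi
  exact (hlow j (lt_trans (Fin.lt_def.1 hji) hi)).2

/-- Proposition 1, part 2: if the subjects known to be cured are exactly those whose observed
time exceeds a known fixed cure threshold `dth` (the first `n₁` ordered observations have
`T_(i) < dth` and unknown/uncured status, the remaining ones have `T_(i) ≥ dth`, are censored
and known to be cured), then the proposed product-limit estimator coincides with Beran's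
estimator. -/
theorem stmt8 (n : ℕ) (B : Fin n → ℝ) (hB : ∀ i, 0 < B i)
    (T : Fin n → EReal) (hT : Monotone T) (d c : Fin n → Bool)
    (dth : ℝ) (n₁ : ℕ) (hn₁ : n₁ ≤ n)
    (hlow : ∀ i : Fin n, (i : ℕ) < n₁ → T i < (dth : EReal) ∧ c i = false)
    (hhigh : ∀ i : Fin n, n₁ ≤ (i : ℕ) → (dth : EReal) ≤ T i ∧ d i = false ∧ c i = true)
    (t : ℝ) :
    Shatc n B T d c t = ShatBeran n B T d t :=
  stmt8_general n B T d c dth n₁ hlow hhigh t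
end
end

section
/- (Proposition 1, part 3.) Suppose there is no censoring: δ_i = 1 for all i, the observed times are the ordered lifetimes Y_(1) ≤ … ≤ Y_(n) taking values in ℝ ∪ {+∞} (cured subjects have Y_(i) = +∞ and known-cure indicator ξ_iν_i = 1(Y_(i) = +∞)), and the weights satisfy ∑_{i=1}^n B_i = 1 with each B_i > 0. Then for every real t, ∏_{i=1}^n {1 − B_i 1(Y_(i) ≤ t)/(∑_{j=i}^n B_j + ∑_{j=1}^{i−1} B_j 1(Y_(j) = +∞))} = ∑_{i=1}^n B_i 1(Y_(i) > t); that is, the proposed estimator reduces to the kernel-type (Nadaraya–Watson) estimator of the conditional survival function. -/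
/-!
Let `s` be the set of indices with `Y i ≤ t`; by monotonicity it is an initial segment. For
`i ∈ s` no earlier subject is known to be cured, so the denominator is the tail sum
`T i = ∑_{j ≥ i} B j` and the factor is `1 - B i / T i = T (i + 1) / T i`. The product over `s`
telescopes to the tail sum beyond `s`, which is the total weight of the subjects with `Y i > t`.
-/

open scoped Classical
open Finset

theorem filter_lt_and_eq_top_eq_empty {ι α : Type*} [Preorder ι] [Fintype ι] [PartialOrder α]
    [OrderTop α] {Y : ι → α} (hY : Monotone Y) {i : ι} (hi : Y i ≠ ⊤)
    [DecidablePred fun j => j < i ∧ Y j = ⊤] :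
    univ.filter (fun j => j < i ∧ Y j = ⊤) = ∅ :=
  filter_eq_empty_iff.mpr fun _ _ ⟨hji, hj⟩ => hi (top_le_iff.mp (hj ▸ hY hji.le))

theorem compl_eq_filter_le_of_isLowerSet_insert {ι : Type*} [LinearOrder ι] [Fintype ι]
    {a : ι} {s : Finset ι} (hlt : ∀ x ∈ s, x < a)
    (hs : IsLowerSet ((insert a s : Finset ι) : Set ι)) :
    sᶜ = univ.filter (fun j => a ≤ j) := by
  ext j
  simp only [mem_compl, mem_filter, mem_univ, true_and]
  constructor
  · intro hj
    by_contra! hja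
    have := hs hja.le (mem_coe.mpr (mem_insert_self a s))
    rw [mem_coe, mem_insert] at this
    exact this.elim hja.ne hj
  · exact fun haj hj => (hlt j hj).not_ge haj

theorem isLowerSet_of_isLowerSet_insert {ι : Type*} [LinearOrder ι] {a : ι} {s : Finset ι}
    (hlt : ∀ x ∈ s, x < a) (hs : IsLowerSet ((insert a s : Finset ι) : Set ι)) :
    IsLowerSet (s : Set ι) := by
  intro x y hyx hx
  have hya : y ≠ a := (hyx.trans_lt (hlt x hx)).ne
  simpa [hya] using hs hyx (by simp [mem_coe.mp hx])

theorem prod_one_sub_div_tail_mul_sum {ι 𝕜 : Type*} [LinearOrder ι] [Fintype ι] [Field 𝕜]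
    (B : ι → 𝕜) {s : Finset ι} (hs : IsLowerSet (s : Set ι))
    (hT : ∀ i ∈ s, ∑ j ∈ univ.filter (fun j => i ≤ j), B j ≠ 0) :
    (∏ i ∈ s, (1 - B i / ∑ j ∈ univ.filter (fun j => i ≤ j), B j)) * ∑ j, B j
      = ∑ j ∈ sᶜ, B j := by
  induction s using Finset.induction_on_max with
  | empty => simp
  | insert a s hlt ih =>
    have has : a ∉ s := fun h => (hlt a h).false
    have hcompl := compl_eq_filter_le_of_isLowerSet_insert hlt hs
    rw [prod_insert has, mul_assoc,
      ih (isLowerSet_of_isLowerSet_insert hlt hs) (fun i hi => hT i (mem_insert_of_mem hi)),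
      compl_insert, sum_erase_eq_sub (by simp [has]), hcompl]
    field_simp [hT a (mem_insert_self a s)]

/-- Proposition 1, part 3: when there is no censoring (`δᵢ = 1` for all `i`, the observed
times being the ordered lifetimes `Y_(1) ≤ … ≤ Y_(n)` with values in `ℝ ∪ {+∞}`, cured
subjects having `Y_(i) = +∞` and known-cure indicator `1(Y_(i) = +∞)`), and the weights
add up to one, the proposed product-limit estimator reduces to the kernel-type
(Nadaraya–Watson) estimator of the conditional survival function. -/
theorem stmt9 (n : ℕ) (B : Fin n → ℝ) (hB : ∀ i, 0 < B i) (hB1 : ∑ i : Fin n, B i = 1)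
    (Y : Fin n → EReal) (hY : Monotone Y) (t : ℝ) :
    (∏ i : Fin n,
      (1 - (if Y i ≤ (t : EReal) then B i else 0) /
        ((∑ j ∈ univ.filter fun j => i ≤ j, B j) +
          ∑ j ∈ univ.filter fun j => j < i ∧ Y j = (⊤ : EReal), B j)))
      = ∑ i ∈ univ.filter fun i => (t : EReal) < Y i, B i := by
  set s := univ.filter fun i : Fin n => Y i ≤ (t : EReal)
  have hs : IsLowerSet (s : Set (Fin n)) := fun i j hji hi => by
    simp only [s, coe_filter, mem_univ, true_and, Set.mem_ofPred_eq] at hi ⊢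
    exact (hY hji).trans hi
  have hfactor : ∀ i, (1 - (if Y i ≤ (t : EReal) then B i else 0) /
      ((∑ j ∈ univ.filter fun j => i ≤ j, B j) +
        ∑ j ∈ univ.filter fun j => j < i ∧ Y j = (⊤ : EReal), B j))
      = if Y i ≤ (t : EReal) then 1 - B i / ∑ j ∈ univ.filter fun j => i ≤ j, B j else 1 := by
    intro i
    split_ifs with hi
    · rw [filter_lt_and_eq_top_eq_empty hY (ne_top_of_le_ne_top (EReal.coe_ne_top t) hi),
        sum_empty, add_zero]
    · rw [zero_div, sub_zero]
  have hT : ∀ i ∈ s, ∑ j ∈ univ.filter (fun j => i ≤ j), B j ≠ 0 :=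
    fun i _ => (sum_pos (fun j _ => hB j) ⟨i, by simp⟩).ne'
  calc _ = (∏ i ∈ s, (1 - B i / ∑ j ∈ univ.filter fun j => i ≤ j, B j)) * ∑ j, B j := by
        rw [prod_congr rfl fun i _ => hfactor i, prod_filter, hB1, mul_one]
    _ = ∑ j ∈ sᶜ, B j := prod_one_sub_div_tail_mul_sum B hs hT
    _ = _ := by congr 1; ext i; simp [s]
end

section
/- (Proposition 1, part 4.) In the unconditional setting with equal weights 1/n, suppose a subject is known to be cured exactly when its observed time exceeds a known fixed time d: there is n₁ ≤ n (with m = n − n₁ cured) such that for i ≤ n₁ one has T_(i) < d and ξ_iν_i = 0, and for i > n₁ one has T_(i) ≥ d, δ_i = 0 and ξ_iν_i = 1. Then for every t, Ŝ_n^c(t) = ∏_{i=1}^n {1 − δ_i 1(T_(i) ≤ t)/(n − i + 1 + ∑_{j=1}^{i−1} 1(ξ_jν_j = 1))} equals ∏_{i=1}^n {1 − δ_i 1(T_(i) ≤ t)/(n − i + 1)}, the generalized maximum likelihood estimator of Laska and Meisner. -/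
open scoped Classical
open Finset

/-- At an event the cured-count correction vanishes; elsewhere the factor is `1` whatever the
denominator. -/
theorem prod_one_sub_div_add_card_cured_eq {n : ℕ} (ev : Fin n → Prop) [DecidablePred ev]
    (c : Fin n → Bool) (h : ∀ i, ev i → ∀ j < i, c j = false) :
    (∏ i : Fin n,
      (1 - (if ev i then (1 : ℝ) else 0) /
        ((n - (i : ℕ) + (univ.filter fun j => j < i ∧ c j = true).card : ℕ) : ℝ)))
    = ∏ i : Fin n, (1 - (if ev i then (1 : ℝ) else 0) / ((n - (i : ℕ) : ℕ) : ℝ)) := by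
  refine prod_congr rfl fun i _ => ?_
  by_cases hi : ev i
  · have hcard : (univ.filter fun j => j < i ∧ c j = true).card = 0 := by
      rw [card_eq_zero, filter_eq_empty_iff]
      rintro j - ⟨hji, hcj⟩
      simp [h i hi j hji] at hcj
    rw [hcard, add_zero]
  · simp [hi]

/-- Indices are `0`-based, so the paper's `n − i + 1` reads `n − i`. -/
theorem stmt10_general (n : ℕ) (T : Fin n → EReal) (d c : Fin n → Bool)
    (dth : ℝ) (n₁ : ℕ)
    (hlow : ∀ i : Fin n, (i : ℕ) < n₁ → T i < (dth : EReal) ∧ c i = false)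
    (hhigh : ∀ i : Fin n, n₁ ≤ (i : ℕ) → (dth : EReal) ≤ T i ∧ d i = false ∧ c i = true)
    (t : ℝ) :
    (∏ i : Fin n,
      (1 - (if d i = true ∧ T i ≤ (t : EReal) then (1 : ℝ) else 0) /
        ((n - (i : ℕ) + (univ.filter fun j => j < i ∧ c j = true).card : ℕ) : ℝ)))
    = ∏ i : Fin n,
      (1 - (if d i = true ∧ T i ≤ (t : EReal) then (1 : ℝ) else 0) /
        ((n - (i : ℕ) : ℕ) : ℝ)) := by
  refine prod_one_sub_div_add_card_cured_eq _ c fun i hi j hji => ?_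
  have hi_low : (i : ℕ) < n₁ := by
    by_contra hi_high
    simp [(hhigh i (not_lt.mp hi_high)).2.1] at hi
  exact (hlow j (lt_trans hji hi_low)).2

/-- Proposition 1, part 4: in the unconditional setting (all Nadaraya–Watson weights equal
to `1/n`), if a subject is known to be cured exactly when its observed time exceeds a known
fixed time `dth` (the first `n₁` ordered observations have `T_(i) < dth` and unknown/uncured
status, the remaining `m = n − n₁` ones have `T_(i) ≥ dth`, are censored and known to be
cured), then the proposed estimator
`Ŝ_n^c(t) = ∏ᵢ {1 − δᵢ1(T_(i) ≤ t)/(n − i + 1 + ∑_{j<i} 1(ξⱼνⱼ = 1))}`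
coincides with the generalized maximum likelihood estimator of Laska and Meisner
`∏ᵢ {1 − δᵢ1(T_(i) ≤ t)/(n − i + 1)}`.  (Here indices are `0`-based, so the paper's
`n − i + 1` reads `n − i`.) -/
theorem stmt10 (n : ℕ) (T : Fin n → EReal) (hT : Monotone T) (d c : Fin n → Bool)
    (dth : ℝ) (n₁ : ℕ) (hn₁ : n₁ ≤ n)
    (hlow : ∀ i : Fin n, (i : ℕ) < n₁ → T i < (dth : EReal) ∧ c i = false)
    (hhigh : ∀ i : Fin n, n₁ ≤ (i : ℕ) → (dth : EReal) ≤ T i ∧ d i = false ∧ c i = true)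
    (t : ℝ) :
    (∏ i : Fin n,
      (1 - (if d i = true ∧ T i ≤ (t : EReal) then (1 : ℝ) else 0) /
        ((n - (i : ℕ) + (univ.filter fun j => j < i ∧ c j = true).card : ℕ) : ℝ)))
    = ∏ i : Fin n,
      (1 - (if d i = true ∧ T i ≤ (t : EReal) then (1 : ℝ) else 0) /
        ((n - (i : ℕ) : ℕ) : ℝ)) :=
  stmt10_general n T d c dth n₁ hlow hhigh t
end
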